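/- Let 𝔞_• and 𝔟_• be graded families of ideals in a Noetherian commutative ring S. If ρ^{lim}(𝔞_•, 𝔟_•) ≠ ρ(𝔞_•, 𝔟_•), then ρ(𝔞_•, 𝔟_•) is a rational number; moreover, ρ^{lim}(𝔞_•, 𝔟_•) < ∞ if and only if ρ(𝔞_•, 𝔟_•) < ∞. -/

import Mathlib

open Filter Polynomial
open scoped ENNReal NNReal

set_option synthInstance.maxHeartbeats 1000000
set_option maxHeartbeats 1000000

universe u

section Preamble

variable {S : Type u} [CommRing S]

/-- A graded family of ideals: `a 0 = S` and `a p * a q ⊆ a (p + q)` for all `p, q`. -/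
def GradedFamily (a : ℕ → Ideal S) : Prop :=
  a 0 = ⊤ ∧ ∀ p q : ℕ, a p * a q ≤ a (p + q)

/-- A filtration of ideals: a graded family which is descending. -/
def IdealFiltration (a : ℕ → Ideal S) : Prop :=
  GradedFamily a ∧ ∀ p : ℕ, a (p + 1) ≤ a p

/-- The integral closure of an ideal `I`: the ideal of all elements `x` satisfying an
equation of integral dependence `x ^ n + c 1 * x ^ (n - 1) + ⋯ + c n = 0` with `c i ∈ I ^ i`. -/
noncomputable def intClosure (I : Ideal S) : Ideal S :=
  Ideal.span {x : S | ∃ n : ℕ, 0 < n ∧ ∃ c : ℕ → S,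
    (∀ i, 1 ≤ i → i ≤ n → c i ∈ I ^ i) ∧
    x ^ n + ∑ i ∈ Finset.Icc 1 n, c i * x ^ (n - i) = 0}

/-- The resurgence `ρ(a, b) = sup { s / r : ¬ a s ⊆ b r }` (as an extended real number,
with `sSup ∅ = ⊥`). -/
noncomputable def resurgence (a b : ℕ → Ideal S) : EReal :=
  sSup {x : EReal | ∃ s r : ℕ, 0 < s ∧ 0 < r ∧ ¬ a s ≤ b r ∧
    x = (((s : ℝ) / (r : ℝ) : ℝ) : EReal)}

/-- The asymptotic resurgence `ρ̂(a, b) = sup { s / r : ¬ a (s*t) ⊆ b (r*t) for all t ≫ 1}`. -/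
noncomputable def asympResurgence (a b : ℕ → Ideal S) : EReal :=
  sSup {x : EReal | ∃ s r : ℕ, 0 < s ∧ 0 < r ∧
    (∀ᶠ t : ℕ in atTop, ¬ a (s * t) ≤ b (r * t)) ∧
    x = (((s : ℝ) / (r : ℝ) : ℝ) : EReal)}

/-- The `k`-th Veronese subalgebra of the Rees algebra of the graded family `b` is a
standard graded `S`-algebra, i.e. `b (k*n) = (b k) ^ n` for all `n ≥ 1`. -/
def StdVeronese (b : ℕ → Ideal S) (k : ℕ) : Prop :=
  ∀ n : ℕ, 1 ≤ n → b (k * n) = b k ^ n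

/-- The Rees algebra `ℛ(b) = ⊕ₙ bₙ tⁿ ⊆ S[t]` of a graded family, as a set of polynomials. -/
def ReesSet (b : ℕ → Ideal S) : Set (Polynomial S) :=
  {p : Polynomial S | ∀ n : ℕ, p.coeff n ∈ b n}

/-- `ℛ(b')` is a finitely generated `ℛ(b)`-module: there is a finite set `G ⊆ ℛ(b')`
such that every element of `ℛ(b')` is an `ℛ(b)`-linear combination of elements of `G`. -/
def ReesFGModule (b b' : ℕ → Ideal S) : Prop :=
  ∃ G : Finset (Polynomial S), (G : Set (Polynomial S)) ⊆ ReesSet b' ∧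
    ∀ p ∈ ReesSet b', ∃ c : Polynomial S → Polynomial S,
      (∀ g ∈ G, c g ∈ ReesSet b) ∧ p = ∑ g ∈ G, c g * g

/-- A graded family `b` is `bb`-equivalent (for an ideal `bb`) if for some `k`,
`b (i + k) ⊆ bb ^ i ⊆ b i` for all `i ≥ 1`. -/
def BEquivalent (bb : Ideal S) (b : ℕ → Ideal S) : Prop :=
  ∃ k : ℕ, ∀ i : ℕ, 1 ≤ i → b (i + k) ≤ bb ^ i ∧ bb ^ i ≤ b i

/-- `β_n(a, b) = inf { d ≥ 1 : ¬ a n ⊆ b d }`, with `inf ∅ = ∞`. -/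
noncomputable def betaIdx (a b : ℕ → Ideal S) (n : ℕ) : ℕ∞ :=
  sInf {d : ℕ∞ | ∃ m : ℕ, 0 < m ∧ ¬ a n ≤ b m ∧ d = (m : ℕ∞)}

/-- `ρ^n(a, b) = sup { s / β_s(a, b) : s ≥ n, β_s(a, b) < ∞ }`. -/
noncomputable def rhoN (a b : ℕ → Ideal S) (n : ℕ) : EReal :=
  sSup {x : EReal | ∃ s d : ℕ, n ≤ s ∧ 0 < s ∧ betaIdx a b s = (d : ℕ∞) ∧
    x = (((s : ℝ) / (d : ℝ) : ℝ) : EReal)}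

/-- `ρ^lim(a, b) = lim_{n → ∞} ρ^n(a, b)`, the limit of the nonincreasing sequence `ρ^n`,
i.e. its infimum. -/
noncomputable def rhoLim (a b : ℕ → Ideal S) : EReal :=
  ⨅ n : ℕ, rhoN a b n

end Preamble

section Valuations

variable {S : Type u} [CommRing S] [IsDomain S]

/-- A (discrete) valuation of the quotient field `K` of `S`: a function `v : K → ℤ` with
`v (x * y) = v x + v y` and `v (x + y) ≥ min (v x) (v y)` (for nonzero elements). -/
structure ValuationOn (S : Type u) [CommRing S] [IsDomain S] where
  v : FractionRing S → ℤ
  map_mul : ∀ x y : FractionRing S, x ≠ 0 → y ≠ 0 → v (x * y) = v x + v y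
  min_le_map_add : ∀ x y : FractionRing S, x ≠ 0 → y ≠ 0 → x + y ≠ 0 →
    min (v x) (v y) ≤ v (x + y)

/-- A valuation of the quotient field is supported on `S` if it is nonnegative on `S`. -/
def ValuationOn.Supported (w : ValuationOn S) : Prop :=
  ∀ x : S, x ≠ 0 → 0 ≤ w.v (algebraMap S (FractionRing S) x)

/-- `v(I) = min { v x : x ∈ I, x ≠ 0 }`. -/
noncomputable def idealVal (w : ValuationOn S) (I : Ideal S) : ℤ :=
  sInf {m : ℤ | ∃ x ∈ I, x ≠ 0 ∧ w.v (algebraMap S (FractionRing S) x) = m}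

/-- The skew Waldschmidt constant `v̂(a) = inf_{n ≥ 1} v(a n) / n (= lim_{n → ∞} v(a n)/n)`. -/
noncomputable def skewWald (w : ValuationOn S) (a : ℕ → Ideal S) : ℝ :=
  sInf {t : ℝ | ∃ n : ℕ, 0 < n ∧ t = (idealVal w (a n) : ℝ) / (n : ℝ)}

/-- `β_n^v(a, b) = inf { d ≥ 1 : v(a n) < v(b d) }`, with `inf ∅ = ∞`. -/
noncomputable def betaVal (w : ValuationOn S) (a b : ℕ → Ideal S) (n : ℕ) : ℕ∞ :=
  sInf {d : ℕ∞ | ∃ m : ℕ, 0 < m ∧ idealVal w (a n) < idealVal w (b m) ∧ d = (m : ℕ∞)}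

end Valuations

section Domains

/-- `S` is a finitely generated algebra over a field. -/
structure FieldBase (S : Type u) [CommRing S] where
  F : Type u
  [fld : Field F]
  [alg : Algebra F S]
  fg : Algebra.FiniteType F S

/-- `S` is finitely generated over a Noetherian integrally closed domain `R` with the
property that every finitely generated `R`-algebra (domain) has module-finite integral
closure (in its fraction field). -/
structure NagataBase (S : Type u) [CommRing S] where
  R : Type u
  [cring : CommRing R]
  [dom : IsDomain R]
  [noeth : IsNoetherianRing R]
  [intClosed : IsIntegrallyClosed R]
  [alg : Algebra R S]
  fg : Algebra.FiniteType R S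
  finiteIntegralClosure : ∀ (A : Type u) [CommRing A] [IsDomain A] [Algebra R A],
    Algebra.FiniteType R A → Module.Finite A (integralClosure A (FractionRing A))

/-- `S` is a complete local Noetherian ring, or finitely generated over a field or over `ℤ`,
or, more generally, finitely generated over a Noetherian integrally closed domain `R` such
that every finitely generated `R`-algebra has a module-finite integral closure. -/
def AdmissibleDomain (S : Type u) [CommRing S] : Prop :=
  (IsNoetherianRing S ∧ ∃ m : Ideal S, m.IsMaximal ∧ (∀ I : Ideal S, I.IsMaximal → I = m) ∧
    IsAdicComplete m S)
  ∨ Nonempty (FieldBase S) ∨ Algebra.FiniteType ℤ S ∨ Nonempty (NagataBase S)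

end Domains

/-!
Since `β_s(a, b) ≤ r` whenever `a s ⊄ b r`, the resurgence is `ρ¹(a, b)`, and `ρ¹` differs from
`ρⁿ` only by the finitely many rational values `s / β_s(a, b)` with `s < n`. So if `ρⁿ < ρ` for
some `n`, then `ρ` is the largest of these values, and if `ρⁿ < ∞` then `ρ < ∞`.
-/

section Resurgence

variable {S : Type u} [CommRing S] (a b : ℕ → Ideal S)

lemma betaIdx_eq_coe {s d : ℕ} (h : betaIdx a b s = d) : 0 < d ∧ ¬ a s ≤ b d := by
  have hne : {e : ℕ∞ | ∃ m : ℕ, 0 < m ∧ ¬ a s ≤ b m ∧ e = m}.Nonempty := by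
    by_contra hempty
    rw [Set.not_nonempty_iff_eq_empty] at hempty
    rw [betaIdx, hempty, sInf_empty] at h
    exact ENat.top_ne_natCast d h
  obtain ⟨m, hm, hab, hm_eq⟩ := csInf_mem hne
  rw [← betaIdx, h, Nat.cast_inj] at hm_eq
  exact hm_eq ▸ ⟨hm, hab⟩

lemma exists_betaIdx_eq_coe_le {s r : ℕ} (hr : 0 < r) (h : ¬ a s ≤ b r) :
    ∃ d : ℕ, betaIdx a b s = d ∧ d ≤ r := by
  have hle : betaIdx a b s ≤ r := sInf_le ⟨r, hr, h, rfl⟩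
  obtain ⟨d, hd⟩ := WithTop.ne_top_iff_exists.mp (hle.trans_lt (ENat.natCast_lt_top r)).ne
  rw [← hd] at hle
  exact ⟨d, hd.symm, ENat.natCast_le_natCast.mp hle⟩

lemma resurgence_eq_rhoN_one : resurgence a b = rhoN a b 1 := by
  apply le_antisymm
  · refine sSup_le ?_
    rintro _ ⟨s, r, hs, hr, hab, rfl⟩
    obtain ⟨d, hd, hdr⟩ := exists_betaIdx_eq_coe_le a b hr hab
    have hd0 : (0 : ℝ) < d := by exact_mod_cast (betaIdx_eq_coe a b hd).1
    refine le_sSup_of_le ⟨s, d, hs, hs, hd, rfl⟩ (EReal.coe_le_coe_iff.mpr ?_)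
    gcongr
  · refine sSup_le_sSup ?_
    rintro _ ⟨s, d, -, hs, hd, rfl⟩
    obtain ⟨hd0, hab⟩ := betaIdx_eq_coe a b hd
    exact ⟨s, d, hs, hd0, hab, rfl⟩

lemma rhoN_antitone : Antitone (rhoN a b) := fun _ _ hmn =>
  sSup_le_sSup fun _ ⟨s, d, hs, hs0, hd, hx⟩ => ⟨s, d, hmn.trans hs, hs0, hd, hx⟩

def betaRatiosBelow (n : ℕ) : Set EReal :=
  {x | ∃ s d : ℕ, 0 < s ∧ s < n ∧ betaIdx a b s = d ∧ x = (((s : ℝ) / (d : ℝ) : ℝ) : EReal)}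

lemma rhoN_one_eq_sup {n : ℕ} (hn : 1 ≤ n) :
    rhoN a b 1 = rhoN a b n ⊔ sSup (betaRatiosBelow a b n) := by
  rw [rhoN, rhoN, ← sSup_union]
  congr 1
  ext x
  constructor
  · rintro ⟨s, d, -, hs, hd, rfl⟩
    rcases le_or_gt n s with hns | hsn
    · exact Or.inl ⟨s, d, hns, hs, hd, rfl⟩
    · exact Or.inr ⟨s, d, hs, hsn, hd, rfl⟩
  · rintro (⟨s, d, hns, hs, hd, rfl⟩ | ⟨s, d, hs, -, hd, rfl⟩)
    · exact ⟨s, d, hn.trans hns, hs, hd, rfl⟩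
    · exact ⟨s, d, hs, hs, hd, rfl⟩

lemma betaRatiosBelow_finite (n : ℕ) : (betaRatiosBelow a b n).Finite := by
  refine ((Set.finite_Iio n).image
    fun s : ℕ => (((s : ℝ) / (betaIdx a b s).toNat : ℝ) : EReal)).subset ?_
  rintro _ ⟨s, d, -, hsn, hd, rfl⟩
  exact ⟨s, hsn, by simp only [hd, ENat.toNat_natCast]⟩

lemma exists_rat_eq_sSup_betaRatiosBelow {n : ℕ} (h : sSup (betaRatiosBelow a b n) ≠ ⊥) :
    ∃ q : ℚ, sSup (betaRatiosBelow a b n) = ((q : ℝ) : EReal) := by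
  have hne : (betaRatiosBelow a b n).Nonempty :=
    Set.nonempty_iff_ne_empty.mpr fun hempty => h (hempty ▸ sSup_empty)
  obtain ⟨s, d, -, -, -, hx⟩ := hne.csSup_mem (betaRatiosBelow_finite a b n)
  exact ⟨(s : ℚ) / d, by rw [hx]; push_cast; rfl⟩

lemma sSup_betaRatiosBelow_lt_top (n : ℕ) : sSup (betaRatiosBelow a b n) < ⊤ := by
  rcases (betaRatiosBelow a b n).eq_empty_or_nonempty with hempty | hne
  · simp [hempty]
  · obtain ⟨s, d, -, -, -, hx⟩ := hne.csSup_mem (betaRatiosBelow_finite a b n)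
    exact hx ▸ EReal.coe_lt_top _

lemma rhoLim_le_resurgence : rhoLim a b ≤ resurgence a b :=
  resurgence_eq_rhoN_one a b ▸ iInf_le _ 1

lemma exists_rhoN_lt_of_rhoLim_lt {y : EReal} (h : rhoLim a b < y) :
    ∃ n, 1 ≤ n ∧ rhoN a b n < y := by
  obtain ⟨n, hn⟩ := iInf_lt_iff.mp h
  exact ⟨max n 1, le_max_right n 1, (rhoN_antitone a b (le_max_left n 1)).trans_lt hn⟩

end Resurgence

theorem statement19_general {S : Type u} [CommRing S]
    (a b : ℕ → Ideal S) :
    (rhoLim a b ≠ resurgence a b → ∃ q : ℚ, resurgence a b = ((q : ℝ) : EReal)) ∧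
      (rhoLim a b < ⊤ ↔ resurgence a b < ⊤) := by
  have hle := rhoLim_le_resurgence a b
  refine ⟨fun hne => ?_, fun h => ?_, hle.trans_lt⟩
  · obtain ⟨n, hn, hlt⟩ := exists_rhoN_lt_of_rhoLim_lt a b (hle.lt_of_ne hne)
    rw [resurgence_eq_rhoN_one, rhoN_one_eq_sup a b hn] at hlt ⊢
    have hsup : rhoN a b n < sSup (betaRatiosBelow a b n) := not_le.mp (left_lt_sup.mp hlt)
    rw [sup_eq_right.mpr hsup.le]
    exact exists_rat_eq_sSup_betaRatiosBelow a b (bot_le.trans_lt hsup).ne'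
  · obtain ⟨n, hn, hlt⟩ := exists_rhoN_lt_of_rhoLim_lt a b h
    rw [resurgence_eq_rhoN_one, rhoN_one_eq_sup a b hn]
    exact sup_lt_iff.mpr ⟨hlt, sSup_betaRatiosBelow_lt_top a b n⟩

/-- **Theorem.** Let `a`, `b` be graded families of ideals in a Noetherian ring `S`. If
`ρ^lim(a, b) ≠ ρ(a, b)` then `ρ(a, b)` is a rational number; moreover `ρ^lim(a, b) < ∞` if
and only if `ρ(a, b) < ∞`. -/
theorem statement19 {S : Type u} [CommRing S] [IsNoetherianRing S]
    (a b : ℕ → Ideal S) (ha : GradedFamily a) (hb : GradedFamily b) :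
    (rhoLim a b ≠ resurgence a b → ∃ q : ℚ, resurgence a b = ((q : ℝ) : EReal)) ∧
      (rhoLim a b < ⊤ ↔ resurgence a b < ⊤) :=
  statement19_general a b
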